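/- arXiv:1907.04250 — 4 statements merged into one kernel-verified Lean document; each statement's English description precedes it below -/
import Mathlib

section
/- For all v, w ∈ ℝ and every locally Lipschitz function Ψ : ℝ → ℝ, if Ψ' : ℝ → ℝ is a function such that Ψ has derivative Ψ'(λ) at almost every λ ∈ ℝ, then ∫_ℝ Ψ'(λ)·|χ(λ; v) − χ(λ; w)| dλ = sgn(v − w)·(Ψ(v) − Ψ(w)). -/
open MeasureTheory

/-- The `χ`-function: `χ(λ; v) = 1` if `0 < λ < v`, `= -1` if `v < λ < 0`, `= 0` otherwise. -/
noncomputable def chi (l v : ℝ) : ℝ :=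
  if 0 < l ∧ l < v then 1 else if v < l ∧ l < 0 then -1 else 0

/-!
Off the null set `{0, v, w}`, `|χ(λ; v) - χ(λ; w)|` is the indicator of the interval between `w`
and `v`, so the integral is `± ∫_w^v Ψ'`. A locally Lipschitz function is Lipschitz, hence
absolutely continuous, on compact intervals, so the fundamental theorem of calculus for absolutely
continuous functions evaluates this integral as `Ψ(v) - Ψ(w)`.
-/

open Set

theorem LocallyLipschitz.absolutelyContinuousOnInterval {X : Type*} [PseudoMetricSpace X]
    {f : ℝ → X} (hf : LocallyLipschitz f) (a b : ℝ) : AbsolutelyContinuousOnInterval f a b :=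
  let ⟨_, hK⟩ := hf.locallyLipschitzOn.exists_lipschitzOnWith_of_compact isCompact_uIcc
  hK.absolutelyContinuousOnInterval

theorem AbsolutelyContinuousOnInterval.integral_eq_sub_of_ae_hasDerivAt {f f' : ℝ → ℝ} {a b : ℝ}
    (hf : AbsolutelyContinuousOnInterval f a b) (hf' : ∀ᵐ x, HasDerivAt f (f' x) x) :
    ∫ x in a..b, f' x = f b - f a := by
  rw [← hf.integral_deriv_eq_sub]
  refine intervalIntegral.integral_congr_ae ?_
  filter_upwards [hf'] with x hx _ using hx.deriv.symm

theorem abs_chi_sub_chi_of_le {l v w : ℝ} (hwv : w ≤ v) (h0 : l ≠ 0) (hv : l ≠ v) (hw : l ≠ w) :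
    |chi l v - chi l w| = (Ioc w v).indicator 1 l := by
  simp only [chi, indicator, mem_Ioc, Pi.one_apply]
  split_ifs <;> grind

theorem integral_mul_abs_chi_sub_chi_of_le (f : ℝ → ℝ) {v w : ℝ} (hwv : w ≤ v) :
    ∫ l, f l * |chi l v - chi l w| = ∫ l in w..v, f l := by
  rw [intervalIntegral.integral_of_le hwv, ← integral_indicator measurableSet_Ioc]
  refine integral_congr_ae ?_
  filter_upwards [Measure.ae_ne volume 0, Measure.ae_ne volume v, Measure.ae_ne volume w]
    with l h0 hv hw
  rw [abs_chi_sub_chi_of_le hwv h0 hv hw, ← indicator_mul_right]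
  simp

/-- Lemma 3.1(ii), general form: for a locally Lipschitz `Ψ` with a.e. derivative `Ψ'`,
`∫ Ψ'(λ) |χ(λ; v) - χ(λ; w)| dλ = sgn(v - w) (Ψ(v) - Ψ(w))`. -/
theorem integral_deriv_mul_abs_chi_sub (v w : ℝ) (Ψ Ψ' : ℝ → ℝ)
    (hLip : LocallyLipschitz Ψ)
    (hderiv : ∀ᵐ l : ℝ ∂volume, HasDerivAt Ψ (Ψ' l) l) :
    ∫ l : ℝ, Ψ' l * |chi l v - chi l w| = Real.sign (v - w) * (Ψ v - Ψ w) := by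
  have ftc : ∀ a b, ∫ l in a..b, Ψ' l = Ψ b - Ψ a := fun a b =>
    (hLip.absolutelyContinuousOnInterval a b).integral_eq_sub_of_ae_hasDerivAt hderiv
  rcases lt_trichotomy w v with hwv | rfl | hvw
  · rw [integral_mul_abs_chi_sub_chi_of_le Ψ' hwv.le, ftc, Real.sign_of_pos (sub_pos.2 hwv),
      one_mul]
  · simp
  · simp_rw [abs_sub_comm (chi _ v)]
    rw [integral_mul_abs_chi_sub_chi_of_le Ψ' hvw.le, ftc, Real.sign_of_neg (sub_neg.2 hvw)]
    ring
end

section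
/- Let Ω ⊂ ℝ^d be a bounded open set, T, S > 0, G = Ω × (0,T) × (0,S), Ξ¹ = cl(Ω) × [0,S]. Let a : ℝ → ℝ and φ₁, …, φ_d : ℝ → ℝ be continuously differentiable, let ε ∈ (0,1], and let Z : cl(G) × ℝ → ℝ be continuous with λ·Z(x,t,s,λ) ≤ b₁λ² + b₂ for all (x,t,s) ∈ G and λ ∈ ℝ, where b₁, b₂ ≥ 0. Let u₀⁽¹⁾ : Ξ¹ → ℝ and u₀⁽²⁾, u_S⁽²⁾ : cl(Ω) × [0,T] → ℝ be bounded and continuous. Suppose u is a classical solution of the regularized problem with diffusion parameter ε, source Z, and data u₀⁽¹⁾, u₀⁽²⁾, u_S⁽²⁾. Then for every t' ∈ (0,T] and every ξ > b₁, sup_{cl(Ω)×[0,t']×[0,S]} |u| ≤ e^{ξ t'}·max{ sup_{Ξ¹}|u₀⁽¹⁾|, sup_{cl(Ω)×[0,t']}|u₀⁽²⁾|, sup_{cl(Ω)×[0,t']}|u_S⁽²⁾|, √(b₂/(ξ−b₁)) }. -/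
/-!
Fix `τ < T` and let `M` dominate the data on the parabolic boundary as well as `√(b₂/(ξ-b₁))`.
The weighted function `e^{-ξt}|u|` attains its maximum on the compact set
`cl Ω × [0,τ] × [0,S]`. If this maximum exceeded `M`, it would sit at a point of `G` where, with
`σ = sign u`, the function `σu` is maximal in `x` and `s` (so its first derivatives there vanish
and its second ones are `≤ 0`) while `e^{-ξt}σu` is maximal from the left in `t` (so
`σ∂ₜu ≥ ξ|u|`). The equation then gives `ξ|u| ≤ σZ(u)`, and the growth condition
`uZ(u) ≤ b₁u² + b₂` forces `|u| ≤ √(b₂/(ξ-b₁)) ≤ M`. The time `t = T`, where the equation is not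
available, is reached by continuity.
-/

open MeasureTheory

/-- A classical solution of the regularized problem `Π_{γε}` on
`G = Ω × (0,T) × (0,S)` with diffusion parameter `ε` and source `Z`:
`u` is continuous on `cl G`, its first-order partial derivatives extend continuously to `cl G`,
it is twice continuously differentiable in `(x, s)` (and once in `t`) on `G`, it satisfies the
quasi-linear parabolic equation
`∂ₜu + ∂ₛ(a(u)) + div_x φ(u) = Δₓu + ε ∂²ₛₛu + Z(x,t,s,u)` on `G`, together with the initial
condition `u|_{t=0} = u₀⁽¹⁾`, initial/final conditions `u|_{s=0} = u₀⁽²⁾`, `u|_{s=S} = u_S⁽²⁾`,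
and the homogeneous lateral boundary condition `u|_{∂Ω} = 0`. -/
structure IsClassicalSolution (d : ℕ) (Ω : Set (Fin d → ℝ)) (T S ε : ℝ)
    (a : ℝ → ℝ) (φ : Fin d → ℝ → ℝ) (Z : (Fin d → ℝ) → ℝ → ℝ → ℝ → ℝ)
    (u01 : (Fin d → ℝ) → ℝ → ℝ) (u02 uS2 : (Fin d → ℝ) → ℝ → ℝ)
    (u : (Fin d → ℝ) → ℝ → ℝ → ℝ) : Prop where
  cont : ContinuousOn (fun p : (Fin d → ℝ) × ℝ × ℝ => u p.1 p.2.1 p.2.2)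
      ((closure Ω) ×ˢ (Set.Icc 0 T ×ˢ Set.Icc 0 S))
  deriv_t_ext : ∃ Dt : (Fin d → ℝ) × ℝ × ℝ → ℝ,
      ContinuousOn Dt ((closure Ω) ×ˢ (Set.Icc 0 T ×ˢ Set.Icc 0 S)) ∧
      ∀ x ∈ Ω, ∀ t ∈ Set.Ioo 0 T, ∀ s ∈ Set.Ioo 0 S,
        HasDerivAt (fun t' => u x t' s) (Dt (x, t, s)) t
  deriv_s_ext : ∃ Ds : (Fin d → ℝ) × ℝ × ℝ → ℝ,
      ContinuousOn Ds ((closure Ω) ×ˢ (Set.Icc 0 T ×ˢ Set.Icc 0 S)) ∧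
      ∀ x ∈ Ω, ∀ t ∈ Set.Ioo 0 T, ∀ s ∈ Set.Ioo 0 S,
        HasDerivAt (fun s' => u x t s') (Ds (x, t, s)) s
  deriv_x_ext : ∀ i : Fin d, ∃ Dxi : (Fin d → ℝ) × ℝ × ℝ → ℝ,
      ContinuousOn Dxi ((closure Ω) ×ˢ (Set.Icc 0 T ×ˢ Set.Icc 0 S)) ∧
      ∀ x ∈ Ω, ∀ t ∈ Set.Ioo 0 T, ∀ s ∈ Set.Ioo 0 S,
        HasDerivAt (fun r => u (Function.update x i r) t s) (Dxi (x, t, s)) (x i)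
  contDiff_xs : ∀ t ∈ Set.Ioo 0 T,
      ContDiffOn ℝ 2 (fun q : (Fin d → ℝ) × ℝ => u q.1 t q.2) (Ω ×ˢ Set.Ioo 0 S)
  pde : ∀ x ∈ Ω, ∀ t ∈ Set.Ioo 0 T, ∀ s ∈ Set.Ioo 0 S,
      deriv (fun t' => u x t' s) t + deriv (fun s' => a (u x t s')) s +
          ∑ i : Fin d, deriv (fun r => φ i (u (Function.update x i r) t s)) (x i) =
        (∑ i : Fin d,
            deriv (fun r => deriv (fun r' => u (Function.update x i r') t s) r) (x i)) +
          ε * deriv (fun s1 => deriv (fun s2 => u x t s2) s1) s + Z x t s (u x t s)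
  init : ∀ x ∈ closure Ω, ∀ s ∈ Set.Icc 0 S, u x 0 s = u01 x s
  bc_zero : ∀ x ∈ closure Ω, ∀ t ∈ Set.Icc 0 T, u x t 0 = u02 x t
  bc_S : ∀ x ∈ closure Ω, ∀ t ∈ Set.Icc 0 T, u x t S = uS2 x t
  lateral : ∀ x ∈ frontier Ω, ∀ t ∈ Set.Icc 0 T, ∀ s ∈ Set.Icc 0 S, u x t s = 0

open Set Filter Topology Function

theorem HasDerivAt.nonneg_of_eventually_le_left {g : ℝ → ℝ} {c a : ℝ} (hg : HasDerivAt g c a)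
    (hmax : ∀ᶠ t in 𝓝[<] a, g t ≤ g a) : 0 ≤ c := by
  refine ge_of_tendsto ((hasDerivWithinAt_iff_tendsto_slope' (s := Iio a) (by simp)).1
    (hg.hasDerivWithinAt (s := Iio a))) ?_
  filter_upwards [hmax, self_mem_nhdsWithin] with t hle hlt
  rw [slope_def_field]
  exact div_nonneg_of_nonpos (sub_nonpos.2 hle) (sub_neg.2 hlt).le

theorem HasDerivAt.mul_le_of_exp_weighted_le_left {g : ℝ → ℝ} {g' a ξ : ℝ}
    (hg : HasDerivAt g g' a)
    (hmax : ∀ᶠ t in 𝓝[<] a, Real.exp (-(ξ * t)) * g t ≤ Real.exp (-(ξ * a)) * g a) :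
    ξ * g a ≤ g' := by
  have he : HasDerivAt (fun t => Real.exp (-(ξ * t))) (Real.exp (-(ξ * a)) * -ξ) a := by
    simpa using ((hasDerivAt_id a).const_mul ξ).neg.exp
  have hw : HasDerivAt (fun t => Real.exp (-(ξ * t)) * g t)
      (Real.exp (-(ξ * a)) * (g' - ξ * g a)) a :=
    (he.mul hg).congr_deriv (by ring)
  have := hw.nonneg_of_eventually_le_left hmax
  nlinarith [Real.exp_pos (-(ξ * a))]

theorem IsLocalMax.deriv_deriv_nonpos {f : ℝ → ℝ} {a : ℝ} (h : IsLocalMax f a)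
    (hc : ContinuousAt f a) : deriv (deriv f) a ≤ 0 := by
  by_contra! hpos
  have hmin := isLocalMin_of_deriv_deriv_pos hpos h.deriv_eq_zero hc
  have hconst : f =ᶠ[𝓝 a] fun _ => f a :=
    (h.and hmin).mono fun _ hx => le_antisymm hx.1 hx.2
  rw [hconst.deriv.deriv_eq] at hpos
  simp at hpos

theorem IsLocalMax.const_mul_deriv_deriv_nonpos {f : ℝ → ℝ} {a σ : ℝ}
    (h : IsLocalMax (fun r => σ * f r) a) (hc : ContinuousAt f a) :
    σ * deriv (deriv f) a ≤ 0 := by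
  simpa only [deriv_const_mul_field'] using h.deriv_deriv_nonpos (hc.const_mul σ)

theorem IsLocalMax.hasDerivAt_eq_zero_of_const_mul {f : ℝ → ℝ} {f' a σ : ℝ} (hσ : σ ≠ 0)
    (h : IsLocalMax (fun r => σ * f r) a) (hf : HasDerivAt f f' a) : f' = 0 :=
  (mul_eq_zero.1 (h.hasDerivAt_eq_zero (hf.const_mul σ))).resolve_left hσ

theorem deriv_comp_eq_zero_of_hasDerivAt_zero {F g : ℝ → ℝ} {a : ℝ}
    (hF : DifferentiableAt ℝ F (g a)) (hg : HasDerivAt g 0 a) :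
    deriv (fun r => F (g r)) a = 0 :=
  (hF.hasDerivAt.comp a hg).deriv.trans (mul_zero _)

theorem abs_le_sSup_image_abs {α β : Type*} {f : α → β → ℝ} {A : Set α} {I J : Set β}
    (hb : ∃ C, ∀ x ∈ A, ∀ y ∈ I, |f x y| ≤ C) (hJ : J ⊆ I) {x : α} {y : β} (hx : x ∈ A)
    (hy : y ∈ J) : |f x y| ≤ sSup ((fun p : α × β => |f p.1 p.2|) '' (A ×ˢ J)) := by
  obtain ⟨C, hC⟩ := hb
  have hbdd : BddAbove ((fun p : α × β => |f p.1 p.2|) '' (A ×ˢ J)) :=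
    ⟨C, by rintro _ ⟨p, hp, rfl⟩; exact hC _ hp.1 _ (hJ hp.2)⟩
  exact le_csSup hbdd (mem_image_of_mem _ (mk_mem_prod hx hy))

namespace IsClassicalSolution

variable {d : ℕ} {Ω : Set (Fin d → ℝ)} {T S ε : ℝ} {a : ℝ → ℝ} {φ : Fin d → ℝ → ℝ}
  {Z : (Fin d → ℝ) → ℝ → ℝ → ℝ → ℝ} {u01 u02 uS2 : (Fin d → ℝ) → ℝ → ℝ}
  {u : (Fin d → ℝ) → ℝ → ℝ → ℝ}

theorem continuousOn_time (hu : IsClassicalSolution d Ω T S ε a φ Z u01 u02 uS2 u)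
    {x : Fin d → ℝ} (hx : x ∈ closure Ω) {s : ℝ} (hs : s ∈ Icc 0 S) :
    ContinuousOn (fun t => u x t s) (Icc 0 T) :=
  hu.cont.comp (Continuous.continuousOn (f := fun t : ℝ => (x, t, s)) (by fun_prop))
    fun _ ht => ⟨hx, ht, hs⟩

theorem mul_le_source_of_isMax (hu : IsClassicalSolution d Ω T S ε a φ Z u01 u02 uS2 u)
    (hΩ : IsOpen Ω) (ha : Differentiable ℝ a) (hφ : ∀ i, Differentiable ℝ (φ i)) (hε : 0 ≤ ε)
    {ξ σ : ℝ} (hσ : σ ≠ 0) {x₀ : Fin d → ℝ} {t₀ s₀ : ℝ} (hx₀ : x₀ ∈ Ω) (ht₀ : t₀ ∈ Ioo 0 T)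
    (hs₀ : s₀ ∈ Ioo 0 S)
    (hslice : ∀ x ∈ Ω, ∀ s ∈ Ioo 0 S, σ * u x t₀ s ≤ σ * u x₀ t₀ s₀)
    (hpast : ∀ t ∈ Ioo 0 t₀,
      Real.exp (-(ξ * t)) * (σ * u x₀ t s₀) ≤ Real.exp (-(ξ * t₀)) * (σ * u x₀ t₀ s₀)) :
    ξ * (σ * u x₀ t₀ s₀) ≤ σ * Z x₀ t₀ s₀ (u x₀ t₀ s₀) := by
  obtain ⟨Dt, -, hDt⟩ := hu.deriv_t_ext
  obtain ⟨Ds, -, hDs⟩ := hu.deriv_s_ext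
  have hut := hDt x₀ hx₀ t₀ ht₀ s₀ hs₀
  have hus := hDs x₀ hx₀ t₀ ht₀ s₀ hs₀
  have hux (i : Fin d) := (hu.deriv_x_ext i).choose_spec.2 x₀ hx₀ t₀ ht₀ s₀ hs₀
  have hmax_s : IsLocalMax (fun s => σ * u x₀ t₀ s) s₀ :=
    mem_of_superset (isOpen_Ioo.mem_nhds hs₀) fun s hs => hslice x₀ hx₀ s hs
  have hmax_x (i : Fin d) : IsLocalMax (fun r => σ * u (update x₀ i r) t₀ s₀) (x₀ i) := by
    have hopen : IsOpen (update x₀ i ⁻¹' Ω) := hΩ.preimage (continuous_const.update i continuous_id)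
    refine mem_of_superset (hopen.mem_nhds (by simpa using hx₀)) fun r hr => ?_
    simpa using hslice _ hr s₀ hs₀
  have htime : ξ * (σ * u x₀ t₀ s₀) ≤ σ * Dt (x₀, t₀, s₀) :=
    (hut.const_mul σ).mul_le_of_exp_weighted_le_left
      (mem_of_superset (Ioo_mem_nhdsLT ht₀.1) hpast)
  have ha0 : deriv (fun s => a (u x₀ t₀ s)) s₀ = 0 :=
    deriv_comp_eq_zero_of_hasDerivAt_zero (ha _)
      (hmax_s.hasDerivAt_eq_zero_of_const_mul hσ hus ▸ hus)
  have hφ0 (i : Fin d) : deriv (fun r => φ i (u (update x₀ i r) t₀ s₀)) (x₀ i) = 0 :=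
    deriv_comp_eq_zero_of_hasDerivAt_zero (hφ i _)
      ((hmax_x i).hasDerivAt_eq_zero_of_const_mul hσ (hux i) ▸ hux i)
  have hss := hmax_s.const_mul_deriv_deriv_nonpos hus.continuousAt
  have hxx := fun i => (hmax_x i).const_mul_deriv_deriv_nonpos (hux i).continuousAt
  have hpde := hu.pde x₀ hx₀ t₀ ht₀ s₀ hs₀
  rw [hut.deriv, ha0, Finset.sum_eq_zero fun i _ => hφ0 i, add_zero, add_zero] at hpde
  have hlap : σ * ∑ i, deriv (deriv fun r => u (update x₀ i r) t₀ s₀) (x₀ i) ≤ 0 := by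
    rw [Finset.mul_sum]; exact Finset.sum_nonpos fun i _ => hxx i
  have hdiff := mul_nonpos_of_nonneg_of_nonpos hε hss
  linear_combination htime + σ * hpde + hlap + hdiff

theorem abs_le_sqrt_of_isMax (hu : IsClassicalSolution d Ω T S ε a φ Z u01 u02 uS2 u)
    (hΩ : IsOpen Ω) (ha : Differentiable ℝ a) (hφ : ∀ i, Differentiable ℝ (φ i)) (hε : 0 ≤ ε)
    {b₁ b₂ ξ : ℝ} (hξ : b₁ < ξ) {x₀ : Fin d → ℝ} {t₀ s₀ : ℝ} (hx₀ : x₀ ∈ Ω)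
    (ht₀ : t₀ ∈ Ioo 0 T) (hs₀ : s₀ ∈ Ioo 0 S)
    (hZg : ∀ l, l * Z x₀ t₀ s₀ l ≤ b₁ * l ^ 2 + b₂)
    (hmax : ∀ x ∈ Ω, ∀ t ∈ Ioc 0 t₀, ∀ s ∈ Ioo 0 S,
      Real.exp (-(ξ * t)) * |u x t s| ≤ Real.exp (-(ξ * t₀)) * |u x₀ t₀ s₀|) :
    |u x₀ t₀ s₀| ≤ Real.sqrt (b₂ / (ξ - b₁)) := by
  set l := u x₀ t₀ s₀
  obtain ⟨σ, hσ, hσl⟩ : ∃ σ : ℝ, |σ| = 1 ∧ σ * l = |l| := by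
    rcases le_total 0 l with h | h
    · exact ⟨1, by simp, by simp [abs_of_nonneg h]⟩
    · exact ⟨-1, by simp, by simp [abs_of_nonpos h]⟩
  have hσu (v : ℝ) : σ * v ≤ |v| := by
    simpa [abs_mul, hσ] using le_abs_self (σ * v)
  have hslice : ∀ x ∈ Ω, ∀ s ∈ Ioo 0 S, σ * u x t₀ s ≤ σ * l := fun x hx s hs =>
    (hσu _).trans (hσl ▸ le_of_mul_le_mul_left (hmax x hx t₀ ⟨ht₀.1, le_rfl⟩ s hs)
      (Real.exp_pos _))
  have hpast : ∀ t ∈ Ioo 0 t₀,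
      Real.exp (-(ξ * t)) * (σ * u x₀ t s₀) ≤ Real.exp (-(ξ * t₀)) * (σ * l) := fun t ht =>
    (mul_le_mul_of_nonneg_left (hσu _) (Real.exp_pos _).le).trans
      (hσl ▸ hmax x₀ hx₀ t ⟨ht.1, ht.2.le⟩ s₀ hs₀)
  have hkey := hu.mul_le_source_of_isMax hΩ ha hφ hε (abs_ne_zero.1 (hσ ▸ one_ne_zero)) hx₀ ht₀
    hs₀ hslice hpast
  have hσσ : σ * σ = 1 := by rw [← abs_mul_abs_self, hσ, one_mul]
  have hsq : (ξ - b₁) * l ^ 2 ≤ b₂ := by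
    have := mul_le_mul_of_nonneg_left hkey (abs_nonneg l)
    nlinarith [hZg l]
  exact Real.abs_le_sqrt ((le_div_iff₀ (sub_pos.2 hξ)).2 (by linarith))

theorem exp_neg_mul_abs_le (hu : IsClassicalSolution d Ω T S ε a φ Z u01 u02 uS2 u)
    (hΩo : IsOpen Ω) (hΩb : Bornology.IsBounded Ω) (ha : Differentiable ℝ a)
    (hφ : ∀ i, Differentiable ℝ (φ i)) (hε : 0 ≤ ε) {b₁ b₂ ξ : ℝ} (hξ₀ : 0 ≤ ξ) (hξ : b₁ < ξ)
    (hZg : ∀ x ∈ Ω, ∀ t ∈ Ioo 0 T, ∀ s ∈ Ioo 0 S, ∀ l : ℝ, l * Z x t s l ≤ b₁ * l ^ 2 + b₂)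
    {τ M : ℝ} (hτ : τ < T) (hM : Real.sqrt (b₂ / (ξ - b₁)) ≤ M)
    (hinit : ∀ x ∈ closure Ω, ∀ s ∈ Icc 0 S, |u x 0 s| ≤ M)
    (hbot : ∀ x ∈ closure Ω, ∀ t ∈ Icc 0 τ, |u x t 0| ≤ M)
    (htop : ∀ x ∈ closure Ω, ∀ t ∈ Icc 0 τ, |u x t S| ≤ M) :
    ∀ x ∈ closure Ω, ∀ t ∈ Icc 0 τ, ∀ s ∈ Icc 0 S, Real.exp (-(ξ * t)) * |u x t s| ≤ M := by
  intro x hx t ht s hs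
  set K := closure Ω ×ˢ Icc 0 τ ×ˢ Icc 0 S
  have hKT : K ⊆ closure Ω ×ˢ Icc 0 T ×ˢ Icc 0 S :=
    prod_mono_right (prod_mono_left (Icc_subset_Icc_right hτ.le))
  have hw : ContinuousOn (fun p : (Fin d → ℝ) × ℝ × ℝ =>
      Real.exp (-(ξ * p.2.1)) * |u p.1 p.2.1 p.2.2|) K :=
    (Continuous.continuousOn (by fun_prop)).mul (hu.cont.mono hKT).abs
  obtain ⟨⟨x₀, t₀, s₀⟩, ⟨hx₀, ht₀, hs₀⟩, hmax⟩ :=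
    (hΩb.isCompact_closure.prod (isCompact_Icc.prod isCompact_Icc)).exists_isMaxOn
      ⟨(x, t, s), hx, ht, hs⟩ hw
  replace hmax := isMaxOn_iff.1 hmax
  refine (hmax (x, t, s) ⟨hx, ht, hs⟩).trans (not_lt.1 fun hgt => ?_)
  have hM0 : 0 ≤ M := (Real.sqrt_nonneg _).trans hM
  have hweight : Real.exp (-(ξ * t₀)) ≤ 1 :=
    Real.exp_le_one_iff.2 (neg_nonpos.2 (mul_nonneg hξ₀ ht₀.1))
  have hbig : M < |u x₀ t₀ s₀| := hgt.trans_le (mul_le_of_le_one_left (abs_nonneg _) hweight)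
  have ht₀T : t₀ ∈ Icc 0 T := ⟨ht₀.1, ht₀.2.trans hτ.le⟩
  have hx₀Ω : x₀ ∈ Ω := by
    by_contra h
    have := hu.lateral x₀ (hΩo.frontier_eq ▸ ⟨hx₀, h⟩) t₀ ht₀T s₀ hs₀
    simp only [this, abs_zero] at hbig
    linarith
  have ht₀pos : 0 < t₀ := ht₀.1.lt_of_ne fun h => (hinit x₀ hx₀ s₀ hs₀).not_gt (h ▸ hbig)
  have hs₀pos : 0 < s₀ := hs₀.1.lt_of_ne fun h => (hbot x₀ hx₀ t₀ ht₀).not_gt (h ▸ hbig)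
  have hs₀S : s₀ < S := hs₀.2.lt_of_ne fun h => (htop x₀ hx₀ t₀ ht₀).not_gt (h ▸ hbig)
  have ht₀G : t₀ ∈ Ioo 0 T := ⟨ht₀pos, ht₀.2.trans_lt hτ⟩
  have hs₀G : s₀ ∈ Ioo 0 S := ⟨hs₀pos, hs₀S⟩
  refine hbig.not_ge (le_trans ?_ hM)
  refine hu.abs_le_sqrt_of_isMax hΩo ha hφ hε hξ hx₀Ω ht₀G hs₀G (hZg x₀ hx₀Ω t₀ ht₀G s₀ hs₀G) ?_
  exact fun x' hx' t' ht' s' hs' =>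
    hmax (x', t', s') ⟨subset_closure hx', ⟨ht'.1.le, ht'.2.trans ht₀.2⟩, hs'.1.le, hs'.2.le⟩

theorem abs_le_exp_mul (hu : IsClassicalSolution d Ω T S ε a φ Z u01 u02 uS2 u)
    (hΩo : IsOpen Ω) (hΩb : Bornology.IsBounded Ω) (ha : Differentiable ℝ a)
    (hφ : ∀ i, Differentiable ℝ (φ i)) (hε : 0 ≤ ε) {b₁ b₂ ξ : ℝ} (hξ₀ : 0 ≤ ξ) (hξ : b₁ < ξ)
    (hZg : ∀ x ∈ Ω, ∀ t ∈ Ioo 0 T, ∀ s ∈ Ioo 0 S, ∀ l : ℝ, l * Z x t s l ≤ b₁ * l ^ 2 + b₂)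
    {t' M : ℝ} (ht' : t' ∈ Ioc 0 T) (hM : Real.sqrt (b₂ / (ξ - b₁)) ≤ M)
    (hinit : ∀ x ∈ closure Ω, ∀ s ∈ Icc 0 S, |u01 x s| ≤ M)
    (hbot : ∀ x ∈ closure Ω, ∀ t ∈ Icc 0 t', |u02 x t| ≤ M)
    (htop : ∀ x ∈ closure Ω, ∀ t ∈ Icc 0 t', |uS2 x t| ≤ M) :
    ∀ x ∈ closure Ω, ∀ t ∈ Icc 0 t', ∀ s ∈ Icc 0 S, |u x t s| ≤ Real.exp (ξ * t') * M := by
  intro x hx t ht s hs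
  have hbefore : ∀ r ∈ Ico 0 t', |u x r s| ≤ Real.exp (ξ * t') * M := by
    intro r hr
    have hrT : r < T := hr.2.trans_le ht'.2
    have hsub {t : ℝ} (ht : t ∈ Icc 0 r) : t ∈ Icc 0 T := ⟨ht.1, ht.2.trans hrT.le⟩
    have hweighted := hu.exp_neg_mul_abs_le hΩo hΩb ha hφ hε hξ₀ hξ hZg hrT hM
      (fun x hx s hs => hu.init x hx s hs ▸ hinit x hx s hs)
      (fun x hx t ht => hu.bc_zero x hx t (hsub ht) ▸ hbot x hx t ⟨ht.1, ht.2.trans hr.2.le⟩)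
      (fun x hx t ht => hu.bc_S x hx t (hsub ht) ▸ htop x hx t ⟨ht.1, ht.2.trans hr.2.le⟩)
      x hx r ⟨hr.1, le_rfl⟩ s hs
    calc |u x r s| = Real.exp (ξ * r) * (Real.exp (-(ξ * r)) * |u x r s|) := by
          rw [← mul_assoc, ← Real.exp_add, add_neg_cancel, Real.exp_zero, one_mul]
      _ ≤ Real.exp (ξ * r) * M := by gcongr
      _ ≤ Real.exp (ξ * t') * M := by
          gcongr
          · exact (Real.sqrt_nonneg _).trans hM
          · exact hr.2.le
  have hcl : closure (Ico 0 t') = Icc 0 t' := closure_Ico ht'.1.ne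
  refine le_on_closure hbefore ?_ continuousOn_const (hcl ▸ ht)
  exact hcl ▸ ((hu.continuousOn_time hx hs).mono (Icc_subset_Icc_right ht'.2)).abs

end IsClassicalSolution

theorem maximum_principle_regularized_general (d : ℕ) (Ω : Set (Fin d → ℝ))
    (hΩo : IsOpen Ω) (hΩb : Bornology.IsBounded Ω)
    (T S : ℝ)
    (a : ℝ → ℝ) (φ : Fin d → ℝ → ℝ) (ha : ContDiff ℝ 1 a) (hφ : ∀ i, ContDiff ℝ 1 (φ i))
    (ε : ℝ) (hε : ε ∈ Set.Ioc (0 : ℝ) 1)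
    (Z : (Fin d → ℝ) → ℝ → ℝ → ℝ → ℝ)
    (b₁ b₂ : ℝ) (hb₁ : 0 ≤ b₁)
    (hZg : ∀ x ∈ Ω, ∀ t ∈ Set.Ioo 0 T, ∀ s ∈ Set.Ioo 0 S, ∀ l : ℝ,
        l * Z x t s l ≤ b₁ * l ^ 2 + b₂)
    (u01 u02 uS2 : (Fin d → ℝ) → ℝ → ℝ)
    (hu01b : ∃ C : ℝ, ∀ x ∈ closure Ω, ∀ s ∈ Set.Icc 0 S, |u01 x s| ≤ C)
    (hu02b : ∃ C : ℝ, ∀ x ∈ closure Ω, ∀ t ∈ Set.Icc 0 T, |u02 x t| ≤ C)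
    (huS2b : ∃ C : ℝ, ∀ x ∈ closure Ω, ∀ t ∈ Set.Icc 0 T, |uS2 x t| ≤ C)
    (u : (Fin d → ℝ) → ℝ → ℝ → ℝ)
    (hu : IsClassicalSolution d Ω T S ε a φ Z u01 u02 uS2 u)
    (t' : ℝ) (ht' : t' ∈ Set.Ioc 0 T) (ξ : ℝ) (hξ : b₁ < ξ) :
    ∀ x ∈ closure Ω, ∀ t ∈ Set.Icc 0 t', ∀ s ∈ Set.Icc 0 S,
      |u x t s| ≤ Real.exp (ξ * t') *
        max (max
            (sSup ((fun p : (Fin d → ℝ) × ℝ => |u01 p.1 p.2|) '' ((closure Ω) ×ˢ Set.Icc 0 S)))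
            (sSup ((fun p : (Fin d → ℝ) × ℝ => |u02 p.1 p.2|) '' ((closure Ω) ×ˢ Set.Icc 0 t'))))
          (max
            (sSup ((fun p : (Fin d → ℝ) × ℝ => |uS2 p.1 p.2|) '' ((closure Ω) ×ˢ Set.Icc 0 t')))
            (Real.sqrt (b₂ / (ξ - b₁)))) := by
  have hdata : Icc 0 t' ⊆ Icc 0 T := Icc_subset_Icc_right ht'.2
  refine hu.abs_le_exp_mul hΩo hΩb (ha.differentiable one_ne_zero)
    (fun i => (hφ i).differentiable one_ne_zero) hε.1.le (hb₁.trans hξ.le) hξ hZg ht'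
    (le_max_of_le_right (le_max_right _ _)) ?_ ?_ ?_
  · exact fun x hx s hs =>
      (abs_le_sSup_image_abs hu01b subset_rfl hx hs).trans (le_max_of_le_left (le_max_left _ _))
  · exact fun x hx t ht =>
      (abs_le_sSup_image_abs hu02b hdata hx ht).trans (le_max_of_le_left (le_max_right _ _))
  · exact fun x hx t ht =>
      (abs_le_sSup_image_abs huS2b hdata hx ht).trans (le_max_of_le_right (le_max_left _ _))

/-- Maximum principle (2.3) of Proposition 2.1 for classical solutions of the regularized
problem with a source satisfying the quadratic growth condition. -/
theorem maximum_principle_regularized (d : ℕ) (Ω : Set (Fin d → ℝ))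
    (hΩo : IsOpen Ω) (hΩb : Bornology.IsBounded Ω)
    (T S : ℝ) (hT : 0 < T) (hS : 0 < S)
    (a : ℝ → ℝ) (φ : Fin d → ℝ → ℝ) (ha : ContDiff ℝ 1 a) (hφ : ∀ i, ContDiff ℝ 1 (φ i))
    (ε : ℝ) (hε : ε ∈ Set.Ioc (0 : ℝ) 1)
    (Z : (Fin d → ℝ) → ℝ → ℝ → ℝ → ℝ)
    (hZc : ContinuousOn (fun q : ((Fin d → ℝ) × ℝ × ℝ) × ℝ => Z q.1.1 q.1.2.1 q.1.2.2 q.2)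
        (((closure Ω) ×ˢ (Set.Icc 0 T ×ˢ Set.Icc 0 S)) ×ˢ (Set.univ : Set ℝ)))
    (b₁ b₂ : ℝ) (hb₁ : 0 ≤ b₁) (hb₂ : 0 ≤ b₂)
    (hZg : ∀ x ∈ Ω, ∀ t ∈ Set.Ioo 0 T, ∀ s ∈ Set.Ioo 0 S, ∀ l : ℝ,
        l * Z x t s l ≤ b₁ * l ^ 2 + b₂)
    (u01 u02 uS2 : (Fin d → ℝ) → ℝ → ℝ)
    (hu01c : ContinuousOn (fun p : (Fin d → ℝ) × ℝ => u01 p.1 p.2)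
        ((closure Ω) ×ˢ Set.Icc 0 S))
    (hu01b : ∃ C : ℝ, ∀ x ∈ closure Ω, ∀ s ∈ Set.Icc 0 S, |u01 x s| ≤ C)
    (hu02c : ContinuousOn (fun p : (Fin d → ℝ) × ℝ => u02 p.1 p.2)
        ((closure Ω) ×ˢ Set.Icc 0 T))
    (hu02b : ∃ C : ℝ, ∀ x ∈ closure Ω, ∀ t ∈ Set.Icc 0 T, |u02 x t| ≤ C)
    (huS2c : ContinuousOn (fun p : (Fin d → ℝ) × ℝ => uS2 p.1 p.2)
        ((closure Ω) ×ˢ Set.Icc 0 T))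
    (huS2b : ∃ C : ℝ, ∀ x ∈ closure Ω, ∀ t ∈ Set.Icc 0 T, |uS2 x t| ≤ C)
    (u : (Fin d → ℝ) → ℝ → ℝ → ℝ)
    (hu : IsClassicalSolution d Ω T S ε a φ Z u01 u02 uS2 u)
    (t' : ℝ) (ht' : t' ∈ Set.Ioc 0 T) (ξ : ℝ) (hξ : b₁ < ξ) :
    ∀ x ∈ closure Ω, ∀ t ∈ Set.Icc 0 t', ∀ s ∈ Set.Icc 0 S,
      |u x t s| ≤ Real.exp (ξ * t') *
        max (max
            (sSup ((fun p : (Fin d → ℝ) × ℝ => |u01 p.1 p.2|) '' ((closure Ω) ×ˢ Set.Icc 0 S)))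
            (sSup ((fun p : (Fin d → ℝ) × ℝ => |u02 p.1 p.2|) '' ((closure Ω) ×ˢ Set.Icc 0 t'))))
          (max
            (sSup ((fun p : (Fin d → ℝ) × ℝ => |uS2 p.1 p.2|) '' ((closure Ω) ×ˢ Set.Icc 0 t')))
            (Real.sqrt (b₂ / (ξ - b₁)))) :=
  maximum_principle_regularized_general d Ω hΩo hΩb T S a φ ha hφ ε hε Z b₁ b₂ hb₁ hZg u01 u02 uS2
    hu01b hu02b huS2b u hu t' ht' ξ hξ
end

section
/- Let Ω ⊂ ℝ^d be a bounded open set, T, S > 0, G = Ω × (0,T) × (0,S), Ξ¹ = cl(Ω) × [0,S], Ξ² = cl(Ω) × [0,T], τ ∈ (0,T), and γ₀ = min{τ, T−τ}. Let a, φ₁, …, φ_d : ℝ → ℝ be twice continuously differentiable with a(0) = 0 and φ_i(0) = 0. Let β : Ξ¹ × ℝ → ℝ be continuously differentiable, vanishing for all λ whenever (x,s) lies in some neighborhood of ∂Ξ¹, vanishing whenever |λ| > b₁, and with sup |∂_λ β| ≤ b₀. Let u₀⁽¹⁾ be twice continuously differentiable on Ξ¹ and vanish in a neighborhood of ∂Ξ¹,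 with sup_{Ξ¹}|u₀⁽¹⁾| > 0, and let u₀⁽²⁾, u_S⁽²⁾ be twice continuously differentiable on Ξ² and vanish in a neighborhood of ∂Ξ². Define ξ* = 0 if b₁ ≤ sup_{Ξ¹}|u₀⁽¹⁾| − 1, and ξ* = (2/(2τ−γ₀))·ln((b₁+1)/sup_{Ξ¹}|u₀⁽¹⁾|) if b₁ > sup_{Ξ¹}|u₀⁽¹⁾| − 1. Then for every γ ∈ (0, γ₀/2], every ε ∈ (0,1], every classical solution u of the regularized problem with diffusion parameter ε, source Z(x,t,s,λ) = K_γ(t,τ)·β(x,s,λ), and data u₀⁽¹⁾, u₀⁽²⁾, u_S⁽²⁾, and every t' ∈ (0,T], one has sup_{Ξ¹} |u(·,t',·)| ≤ e^{ξ* t'}·max{ sup_{Ξ¹}|u₀⁽¹⁾|, sup_{Ξ²}|u₀⁽²⁾|, sup_{Ξ²}|u_S⁽²⁾| }. -/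
open MeasureTheory

section AuxLemmas
open Set Filter Topology

lemma aux_left_max {h : ℝ → ℝ} {t₀ D : ℝ} (hD : HasDerivAt h D t₀)
    (hmax : ∀ᶠ t in 𝓝[<] t₀, h t ≤ h t₀) : 0 ≤ D := by
  have hs : Filter.Tendsto (slope h t₀) (𝓝[<] t₀) (𝓝 D) :=
    (hasDerivAt_iff_tendsto_slope.1 hD).mono_left
      (nhdsWithin_mono _ (fun t ht => ne_of_lt ht))
  refine ge_of_tendsto hs ?_
  filter_upwards [hmax, self_mem_nhdsWithin] with t hts ht
  have ht' : t < t₀ := ht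
  rw [slope_def_field]
  have heq : (h t - h t₀) / (t - t₀) = (h t₀ - h t) / (t₀ - t) := by
    rw [div_eq_div_iff (by linarith) (by linarith)]; ring
  rw [heq]
  exact div_nonneg (by linarith) (by linarith)

lemma aux_sdt {g : ℝ → ℝ} {x : ℝ} (hg : ContDiffAt ℝ 2 g x) (hmax : IsLocalMax g x) :
    deriv (deriv g) x ≤ 0 := by
  by_contra hcon
  push_neg at hcon
  obtain ⟨U, hUx, hU⟩ := hg.contDiffOn le_rfl (by simp)
  obtain ⟨V, hVU, hVo, hxV⟩ := mem_nhds_iff.1 hUx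
  have hUV : ContDiffOn ℝ 2 g V := hU.mono hVU
  have hd1 : ContDiffOn ℝ 1 (deriv g) V := hUV.deriv_of_isOpen hVo (by norm_num)
  have hdx : DifferentiableAt ℝ (deriv g) x :=
    (hd1.differentiableOn (by norm_num)).differentiableAt (hVo.mem_nhds hxV)
  have hg0 : deriv g x = 0 := hmax.deriv_eq_zero
  have hslope : Filter.Tendsto (slope (deriv g) x) (𝓝[>] x) (𝓝 (deriv (deriv g) x)) :=
    (hasDerivAt_iff_tendsto_slope.1 hdx.hasDerivAt).mono_left
      (nhdsWithin_mono _ (fun t ht => ne_of_gt ht))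
  have hev : ∀ᶠ t in 𝓝[>] x, 0 < deriv g t := by
    filter_upwards [hslope.eventually (eventually_gt_nhds hcon), self_mem_nhdsWithin]
      with t hts ht
    have ht' : x < t := ht
    rw [slope_def_field, hg0, sub_zero] at hts
    have := mul_pos hts (sub_pos.2 ht')
    rwa [div_mul_cancel₀ _ (by linarith : t - x ≠ 0)] at this
  obtain ⟨r, hr, hball⟩ := Metric.mem_nhds_iff.1 (hVo.mem_nhds hxV)
  obtain ⟨b, hb, hIoo⟩ := mem_nhdsGT_iff_exists_Ioo_subset.1 hev
  have hbx : x < b := hb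
  have hmin : 0 < min (b - x) r := lt_min (by linarith) hr
  set c := x + min (b - x) r / 2 with hc
  have hcb : c < b := by
    have := min_le_left (b - x) r; simp only [hc]; linarith
  have hxc : x < c := by simp only [hc]; linarith
  have hIccV : Set.Icc x c ⊆ V := by
    intro t ht
    apply hball
    have h1 : min (b - x) r ≤ r := min_le_right _ _
    have h2 : t ≤ c := ht.2
    have h3 : x ≤ t := ht.1
    rw [Metric.mem_ball, Real.dist_eq, abs_lt]
    constructor
    · linarith
    · simp only [hc] at h2; linarith
  have hsm : StrictMonoOn g (Set.Icc x c) := by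
    refine strictMonoOn_of_deriv_pos (convex_Icc x c) (hUV.continuousOn.mono hIccV) ?_
    intro t ht
    rw [interior_Icc] at ht
    exact hIoo ⟨ht.1, lt_trans ht.2 hcb⟩
  have h1 : ∀ᶠ t in 𝓝[>] x, g t ≤ g x := hmax.filter_mono nhdsWithin_le_nhds
  have h2 : Set.Ioo x c ∈ 𝓝[>] x := Ioo_mem_nhdsGT_of_mem ⟨le_refl x, hxc⟩
  obtain ⟨t, ht1, ht2⟩ := (h1.and (eventually_of_mem h2 (fun t ht => ht))).exists
  have : g x < g t :=
    hsm (left_mem_Icc.2 (le_of_lt hxc)) ⟨le_of_lt ht2.1, le_of_lt ht2.2⟩ ht2.1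
  linarith

lemma aux_dd_mul {g : ℝ → ℝ} {x : ℝ} (c : ℝ) (hg : ContDiffAt ℝ 2 g x) :
    deriv (deriv (fun y => c * g y)) x = c * deriv (deriv g) x := by
  obtain ⟨U, hUx, hU⟩ := hg.contDiffOn le_rfl (by simp)
  obtain ⟨V, hVU, hVo, hxV⟩ := mem_nhds_iff.1 hUx
  have hUV : ContDiffOn ℝ 2 g V := hU.mono hVU
  have hdiff : ∀ y ∈ V, DifferentiableAt ℝ g y := fun y hy =>
    (hUV.differentiableOn (by norm_num)).differentiableAt (hVo.mem_nhds hy)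
  have hEv : (deriv fun y => c * g y) =ᶠ[𝓝 x] (fun y => c * deriv g y) := by
    filter_upwards [hVo.mem_nhds hxV] with y hy
    exact deriv_const_mul c (hdiff y hy)
  have hdx : DifferentiableAt ℝ (deriv g) x :=
    ((show ContDiffOn ℝ 1 (deriv g) V from hUV.deriv_of_isOpen hVo (by norm_num)).differentiableOn
      (by norm_num)).differentiableAt (hVo.mem_nhds hxV)
  rw [hEv.deriv_eq, deriv_const_mul c hdx]

end AuxLemmas

/-- The kernel `K_γ(t, τ) = 𝟙_{t ≤ τ} (2/γ) ω((t - τ)/γ)`. -/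
noncomputable def Kker (ω : ℝ → ℝ) (γ τ t : ℝ) : ℝ :=
  if t ≤ τ then (2 / γ) * ω ((t - τ) / γ) else 0

open Set Filter Topology in
/-- Lemma 11.3: the maximum principle for classical solutions of the regularized problem with
source `Z_γ = K_γ(t,τ) β(x,s,λ)`, uniform in `γ ∈ (0, γ₀/2]` and `ε ∈ (0, 1]`. -/
theorem uniform_maximum_principle (d : ℕ) (Ω : Set (Fin d → ℝ))
    (hΩo : IsOpen Ω) (hΩb : Bornology.IsBounded Ω)
    (T S : ℝ) (hT : 0 < T) (hS : 0 < S) (τ : ℝ) (hτ : τ ∈ Set.Ioo 0 T)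
    (γ₀ : ℝ) (hγ₀ : γ₀ = min τ (T - τ))
    (a : ℝ → ℝ) (φ : Fin d → ℝ → ℝ) (ha : ContDiff ℝ 2 a) (hφ : ∀ i, ContDiff ℝ 2 (φ i))
    (ha0 : a 0 = 0) (hφ0 : ∀ i, φ i 0 = 0)
    (ω : ℝ → ℝ) (hω_smooth : ContDiff ℝ (⊤ : ℕ∞) ω) (hω_nonneg : ∀ t, 0 ≤ ω t)
    (hω_even : ∀ t, ω (-t) = ω t) (hω_supp : Function.support ω ⊆ Set.Icc (-1) 1)
    (hω_mass : (∫ t : ℝ, ω t) = 1)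
    (β β' : (Fin d → ℝ) → ℝ → ℝ → ℝ) (b₀ b₁ : ℝ)
    (hβC1 : ContDiffOn ℝ 1 (fun q : ((Fin d → ℝ) × ℝ) × ℝ => β q.1.1 q.1.2 q.2)
        (((closure Ω) ×ˢ Set.Icc 0 S) ×ˢ (Set.univ : Set ℝ)))
    (hβd : ∀ x s, (x, s) ∈ (closure Ω) ×ˢ Set.Icc 0 S →
        ∀ l : ℝ, HasDerivAt (fun y => β x s y) (β' x s l) l)
    (hβbd : ∀ x s, (x, s) ∈ (closure Ω) ×ˢ Set.Icc 0 S → ∀ l : ℝ, |β' x s l| ≤ b₀)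
    (hβsupp : ∀ x s, ∀ l : ℝ, b₁ < |l| → β x s l = 0)
    (hβbdry : ∃ U : Set ((Fin d → ℝ) × ℝ), IsOpen U ∧
        frontier ((closure Ω) ×ˢ Set.Icc 0 S) ⊆ U ∧ ∀ p ∈ U, ∀ l : ℝ, β p.1 p.2 l = 0)
    (u01 u02 uS2 : (Fin d → ℝ) → ℝ → ℝ)
    (hu01 : ContDiffOn ℝ 2 (fun p : (Fin d → ℝ) × ℝ => u01 p.1 p.2)
        ((closure Ω) ×ˢ Set.Icc 0 S))
    (hu01bdry : ∃ U : Set ((Fin d → ℝ) × ℝ), IsOpen U ∧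
        frontier ((closure Ω) ×ˢ Set.Icc 0 S) ⊆ U ∧ ∀ p ∈ U, u01 p.1 p.2 = 0)
    (hu02 : ContDiffOn ℝ 2 (fun p : (Fin d → ℝ) × ℝ => u02 p.1 p.2)
        ((closure Ω) ×ˢ Set.Icc 0 T))
    (hu02bdry : ∃ U : Set ((Fin d → ℝ) × ℝ), IsOpen U ∧
        frontier ((closure Ω) ×ˢ Set.Icc 0 T) ⊆ U ∧ ∀ p ∈ U, u02 p.1 p.2 = 0)
    (huS2 : ContDiffOn ℝ 2 (fun p : (Fin d → ℝ) × ℝ => uS2 p.1 p.2)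
        ((closure Ω) ×ˢ Set.Icc 0 T))
    (huS2bdry : ∃ U : Set ((Fin d → ℝ) × ℝ), IsOpen U ∧
        frontier ((closure Ω) ×ˢ Set.Icc 0 T) ⊆ U ∧ ∀ p ∈ U, uS2 p.1 p.2 = 0)
    -- the sup norms of the data
    (N₁ : ℝ) (hN₁ : N₁ =
        sSup ((fun p : (Fin d → ℝ) × ℝ => |u01 p.1 p.2|) '' ((closure Ω) ×ˢ Set.Icc 0 S)))
    (hN₁pos : 0 < N₁)
    (N₂ : ℝ) (hN₂ : N₂ =
        sSup ((fun p : (Fin d → ℝ) × ℝ => |u02 p.1 p.2|) '' ((closure Ω) ×ˢ Set.Icc 0 T)))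
    (N₃ : ℝ) (hN₃ : N₃ =
        sSup ((fun p : (Fin d → ℝ) × ℝ => |uS2 p.1 p.2|) '' ((closure Ω) ×ˢ Set.Icc 0 T)))
    (ξstar : ℝ) (hξstar : ξstar =
        if b₁ ≤ N₁ - 1 then 0 else (2 / (2 * τ - γ₀)) * Real.log ((b₁ + 1) / N₁)) :
    ∀ γ ∈ Set.Ioc (0 : ℝ) (γ₀ / 2), ∀ ε ∈ Set.Ioc (0 : ℝ) 1,
      ∀ u : (Fin d → ℝ) → ℝ → ℝ → ℝ,
        IsClassicalSolution d Ω T S ε a φ (fun x t s l => Kker ω γ τ t * β x s l)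
          u01 u02 uS2 u →
        ∀ t' ∈ Set.Ioc 0 T, ∀ x ∈ closure Ω, ∀ s ∈ Set.Icc 0 S,
          |u x t' s| ≤ Real.exp (ξstar * t') * max (max N₁ N₂) N₃ := by
  intro γ hγ ε hε u hu t' ht'
  have hγpos : 0 < γ := hγ.1
  have hγ₀τ : γ₀ ≤ τ := by rw [hγ₀]; exact min_le_left _ _
  have hγ₀pos : 0 < γ₀ := by rw [hγ₀]; exact lt_min hτ.1 (by linarith [hτ.2])
  have hγle : γ ≤ γ₀ / 2 := hγ.2
  set M := max (max N₁ N₂) N₃ with hM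
  have hN₁M : N₁ ≤ M := le_trans (le_max_left _ _) (le_max_left _ _)
  have hN₂M : N₂ ≤ M := le_trans (le_max_right _ _) (le_max_left _ _)
  have hN₃M : N₃ ≤ M := le_max_right _ _
  have hMpos : 0 < M := lt_of_lt_of_le hN₁pos hN₁M
  have hξ0 : 0 ≤ ξstar := by
    rw [hξstar]; split_ifs with hb
    · exact le_refl 0
    · push_neg at hb
      have hden : 0 < 2 * τ - γ₀ := by linarith [hτ.1]
      exact mul_nonneg (by positivity)
        (Real.log_nonneg ((one_le_div hN₁pos).2 (by linarith)))
  -- the key bound relating b₁ and the exponential barrier after time τ - γ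
  have hexpfact : ∀ t₀ : ℝ, 0 ≤ t₀ → τ - γ ≤ t₀ → b₁ < Real.exp (ξstar * t₀) * M := by
    intro t₀ ht₀0 ht₀γ
    have hexp1 : 1 ≤ Real.exp (ξstar * t₀) := Real.one_le_exp (mul_nonneg hξ0 ht₀0)
    by_cases hb : b₁ ≤ N₁ - 1
    · have h1 : b₁ < M := by linarith
      nlinarith
    · push_neg at hb
      have hξeq : ξstar = (2 / (2 * τ - γ₀)) * Real.log ((b₁ + 1) / N₁) := by
        rw [hξstar, if_neg (not_le.2 hb)]
      have hden : 0 < 2 * τ - γ₀ := by linarith [hτ.1]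
      have hb1N : N₁ < b₁ + 1 := by linarith
      have hb1pos : 0 < b₁ + 1 := by linarith
      have hξ' : Real.log ((b₁ + 1) / N₁) ≤ ξstar * t₀ := by
        have h1 : τ - γ₀ / 2 ≤ t₀ := by linarith
        have h2 : ξstar * (τ - γ₀ / 2) = Real.log ((b₁ + 1) / N₁) := by
          rw [hξeq]; field_simp
        calc Real.log ((b₁ + 1) / N₁) = ξstar * (τ - γ₀ / 2) := h2.symm
          _ ≤ ξstar * t₀ := mul_le_mul_of_nonneg_left h1 hξ0
      have hqpos : (0:ℝ) < (b₁ + 1) / N₁ := div_pos hb1pos hN₁pos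
      have hle : (b₁ + 1) / N₁ ≤ Real.exp (ξstar * t₀) := by
        rw [← Real.exp_log hqpos]; exact Real.exp_le_exp.2 hξ'
      calc b₁ < b₁ + 1 := by linarith
        _ = ((b₁ + 1) / N₁) * N₁ := by field_simp
        _ ≤ Real.exp (ξstar * t₀) * N₁ := mul_le_mul_of_nonneg_right hle hN₁pos.le
        _ ≤ Real.exp (ξstar * t₀) * M :=
            mul_le_mul_of_nonneg_left hN₁M (Real.exp_pos _).le
  -- compactness and data bounds
  have hclΩc : IsCompact (closure Ω) :=
    Metric.isCompact_of_isClosed_isBounded isClosed_closure hΩb.closure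
  have hbd1 : ∀ x' ∈ closure Ω, ∀ s' ∈ Set.Icc 0 S, |u01 x' s'| ≤ N₁ := by
    intro x' hx' s' hs'
    rw [hN₁]
    refine le_csSup ?_ ⟨(x', s'), ⟨hx', hs'⟩, rfl⟩
    exact ((hclΩc.prod isCompact_Icc).image_of_continuousOn
      hu01.continuousOn.abs).bddAbove
  have hbd2 : ∀ x' ∈ closure Ω, ∀ t'' ∈ Set.Icc 0 T, |u02 x' t''| ≤ N₂ := by
    intro x' hx' t'' ht''
    rw [hN₂]
    refine le_csSup ?_ ⟨(x', t''), ⟨hx', ht''⟩, rfl⟩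
    exact ((hclΩc.prod isCompact_Icc).image_of_continuousOn
      hu02.continuousOn.abs).bddAbove
  have hbd3 : ∀ x' ∈ closure Ω, ∀ t'' ∈ Set.Icc 0 T, |uS2 x' t''| ≤ N₃ := by
    intro x' hx' t'' ht''
    rw [hN₃]
    refine le_csSup ?_ ⟨(x', t''), ⟨hx', ht''⟩, rfl⟩
    exact ((hclΩc.prod isCompact_Icc).image_of_continuousOn
      huS2.continuousOn.abs).bddAbove
  obtain ⟨Dt, hDtc, hDt⟩ := hu.deriv_t_ext
  obtain ⟨Ds, hDsc, hDs⟩ := hu.deriv_s_ext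
  choose Dx hDxc hDx using hu.deriv_x_ext
  have main2 : ∀ t₁ ∈ Set.Ioo 0 T, ∀ x₁ ∈ closure Ω, ∀ s₁ ∈ Set.Icc 0 S,
      |u x₁ t₁ s₁| ≤ Real.exp (ξstar * t₁) * M := by
    intro t₁ ht₁ x₁ hx₁ s₁ hs₁
    have hstep : ∀ η : ℝ, 0 < η →
        |u x₁ t₁ s₁| ≤ Real.exp (ξstar * t₁) * (M + η) + η * t₁ := by
      intro η hη
      by_contra hcon
      push_neg at hcon
      set σ : ℝ := if 0 ≤ u x₁ t₁ s₁ then 1 else -1 with hσdef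
      have hσ1 : σ = 1 ∨ σ = -1 := by rw [hσdef]; split_ifs <;> simp
      have hσne : σ ≠ 0 := by rcases hσ1 with h | h <;> rw [h] <;> norm_num
      have hσu : σ * u x₁ t₁ s₁ = |u x₁ t₁ s₁| := by
        rw [hσdef]; split_ifs with h
        · rw [abs_of_nonneg h]; ring
        · rw [abs_of_neg (lt_of_not_ge h)]; ring
      have hσabs : ∀ y : ℝ, σ * y ≤ |y| := by
        intro y; rcases hσ1 with h | h <;> rw [h]
        · rw [one_mul]; exact le_abs_self y
        · rw [neg_one_mul]; exact neg_le_abs y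
      set F : (Fin d → ℝ) × ℝ × ℝ → ℝ :=
        fun p => σ * u p.1 p.2.1 p.2.2 - Real.exp (ξstar * p.2.1) * (M + η) - η * p.2.1
        with hFdef
      have hFval : ∀ (y : Fin d → ℝ) (tt ss : ℝ), F (y, tt, ss) =
          σ * u y tt ss - Real.exp (ξstar * tt) * (M + η) - η * tt :=
        fun _ _ _ => rfl
      set K' : Set ((Fin d → ℝ) × ℝ × ℝ) := (closure Ω) ×ˢ (Set.Icc 0 t₁ ×ˢ Set.Icc 0 S)
        with hK'def
      have hK'sub : K' ⊆ (closure Ω) ×ˢ (Set.Icc 0 T ×ˢ Set.Icc 0 S) := by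
        rw [hK'def]
        refine Set.prod_mono subset_rfl (Set.prod_mono ?_ subset_rfl)
        exact Set.Icc_subset_Icc le_rfl ht₁.2.le
      have hK'c : IsCompact K' := hclΩc.prod (isCompact_Icc.prod isCompact_Icc)
      have hFc : ContinuousOn F K' := by
        rw [hFdef]
        refine ContinuousOn.sub (ContinuousOn.sub ?_ ?_) ?_
        · exact continuousOn_const.mul (hu.cont.mono hK'sub)
        · exact Continuous.continuousOn (by fun_prop)
        · exact Continuous.continuousOn (by fun_prop)
      have hK'ne : ((x₁, t₁, s₁) : (Fin d → ℝ) × ℝ × ℝ) ∈ K' :=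
        ⟨hx₁, ⟨⟨ht₁.1.le, le_refl t₁⟩, hs₁⟩⟩
      obtain ⟨p₀, hp₀K, hp₀max⟩ := hK'c.exists_isMaxOn ⟨_, hK'ne⟩ hFc
      have hmaxpt : ∀ p ∈ K', F p ≤ F p₀ := fun p hp => hp₀max hp
      obtain ⟨x₀, t₀, s₀⟩ := p₀
      obtain ⟨hx₀, ht₀I, hs₀I⟩ := hp₀K
      dsimp only at hx₀ ht₀I hs₀I
      have hF0 : 0 < F (x₀, t₀, s₀) := by
        have h1 := hmaxpt _ hK'ne
        have h2 : 0 < F (x₁, t₁, s₁) := by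
          simp only [hFval]; linarith [hcon, hσu]
        linarith
      have hexpt₀ : 1 ≤ Real.exp (ξstar * t₀) := by
        nlinarith [Real.add_one_le_exp (ξstar * t₀), mul_nonneg hξ0 ht₀I.1]
      have hMη : 0 < M + η := by linarith
      have hηt₀ : 0 ≤ η * t₀ := mul_nonneg hη.le ht₀I.1
      have hexpMη : M + η ≤ Real.exp (ξstar * t₀) * (M + η) :=
        le_mul_of_one_le_left hMη.le hexpt₀
      have hx₀Ω : x₀ ∈ Ω := by
        by_contra hxn
        have hfr : x₀ ∈ frontier Ω := by
          rw [hΩo.frontier_eq]; exact ⟨hx₀, hxn⟩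
        have h0 : u x₀ t₀ s₀ = 0 :=
          hu.lateral x₀ hfr t₀ ⟨ht₀I.1, ht₀I.2.trans ht₁.2.le⟩ s₀ hs₀I
        have hh := hF0
        simp only [hFval] at hh
        rw [h0, mul_zero] at hh
        linarith
      have ht₀pos : 0 < t₀ := by
        by_contra h; push_neg at h
        have ht0 : t₀ = 0 := le_antisymm h ht₀I.1
        have hb := hbd1 x₀ hx₀ s₀ hs₀I
        have hh := hF0; simp only [hFval] at hh
        rw [ht0, hu.init x₀ hx₀ s₀ hs₀I, mul_zero, Real.exp_zero, one_mul,
          mul_zero] at hh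
        linarith [hσabs (u01 x₀ s₀)]
      have ht₀T : t₀ ∈ Set.Ioo 0 T := ⟨ht₀pos, lt_of_le_of_lt ht₀I.2 ht₁.2⟩
      have ht₀Icc : t₀ ∈ Set.Icc 0 T := ⟨ht₀I.1, ht₀T.2.le⟩
      have hs₀pos : 0 < s₀ := by
        by_contra h; push_neg at h
        have hs0 : s₀ = 0 := le_antisymm h hs₀I.1
        have hb := hbd2 x₀ hx₀ t₀ ht₀Icc
        have hh := hF0; simp only [hFval] at hh
        rw [hs0, hu.bc_zero x₀ hx₀ t₀ ht₀Icc] at hh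
        linarith [hσabs (u02 x₀ t₀)]
      have hs₀lt : s₀ < S := by
        rcases lt_or_eq_of_le hs₀I.2 with h | h
        · exact h
        · exfalso
          have hb := hbd3 x₀ hx₀ t₀ ht₀Icc
          have hh := hF0; simp only [hFval] at hh
          rw [h, hu.bc_S x₀ hx₀ t₀ ht₀Icc] at hh
          linarith [hσabs (uS2 x₀ t₀)]
      have hs₀oo : s₀ ∈ Set.Ioo 0 S := ⟨hs₀pos, hs₀lt⟩
      -- time derivative inequality
      have hA := hDt x₀ hx₀Ω t₀ ht₀T s₀ hs₀oo
      have hBexp : HasDerivAt (fun t => Real.exp (ξstar * t) * (M + η))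
          (ξstar * Real.exp (ξstar * t₀) * (M + η)) t₀ := by
        have h1 : HasDerivAt (fun t : ℝ => ξstar * t) ξstar t₀ := by
          simpa using (hasDerivAt_id t₀).const_mul ξstar
        have h2 := (Real.hasDerivAt_exp (ξstar * t₀)).comp t₀ h1
        have h3 := h2.mul_const (M + η)
        exact h3.congr_deriv (by ring)
      have hηd : HasDerivAt (fun t : ℝ => η * t) η t₀ := by
        simpa using (hasDerivAt_id t₀).const_mul η
      have hhd : HasDerivAt
          (fun t => σ * u x₀ t s₀ - Real.exp (ξstar * t) * (M + η) - η * t)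
          (σ * Dt (x₀, t₀, s₀) - ξstar * Real.exp (ξstar * t₀) * (M + η) - η) t₀ :=
        ((hA.const_mul σ).sub hBexp).sub hηd
      have hevleft : ∀ᶠ t in 𝓝[<] t₀,
          (fun t => σ * u x₀ t s₀ - Real.exp (ξstar * t) * (M + η) - η * t) t ≤
          (fun t => σ * u x₀ t s₀ - Real.exp (ξstar * t) * (M + η) - η * t) t₀ := by
        filter_upwards [Ioo_mem_nhdsLT_of_mem
          (⟨ht₀pos, le_refl t₀⟩ : t₀ ∈ Set.Ioc 0 t₀)] with t ht
        have hmem : ((x₀, t, s₀) : (Fin d → ℝ) × ℝ × ℝ) ∈ K' :=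
          ⟨hx₀, ⟨⟨ht.1.le, ht.2.le.trans ht₀I.2⟩, hs₀I⟩⟩
        have h := hmaxpt _ hmem
        simp only [hFval] at h
        exact h
      have htime : 0 ≤ σ * Dt (x₀, t₀, s₀) -
          ξstar * Real.exp (ξstar * t₀) * (M + η) - η :=
        aux_left_max hhd hevleft
      -- s-direction
      have hBs := hDs x₀ hx₀Ω t₀ ht₀T s₀ hs₀oo
      have hlocs : IsLocalMax (fun s' => σ * u x₀ t₀ s') s₀ := by
        filter_upwards [isOpen_Ioo.mem_nhds hs₀oo] with s' hs'
        have hmem : ((x₀, t₀, s') : (Fin d → ℝ) × ℝ × ℝ) ∈ K' :=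
          ⟨hx₀, ⟨ht₀I, ⟨hs'.1.le, hs'.2.le⟩⟩⟩
        have h := hmaxpt _ hmem
        simp only [hFval] at h
        linarith
      have hDs0 : Ds (x₀, t₀, s₀) = 0 := by
        have h := hlocs.hasDerivAt_eq_zero (hBs.const_mul σ)
        exact (mul_eq_zero.1 h).resolve_left hσne
      have haterm : deriv (fun s' => a (u x₀ t₀ s')) s₀ = 0 := by
        have hda : HasDerivAt a (deriv a (u x₀ t₀ s₀)) (u x₀ t₀ s₀) :=
          ((ha.differentiable (by norm_num)) _).hasDerivAt
        have hcomp := hda.comp s₀ hBs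
        rw [hDs0, mul_zero] at hcomp
        exact hcomp.deriv
      -- C² data
      have hcxs := hu.contDiff_xs t₀ ht₀T
      have hopen : IsOpen (Ω ×ˢ Set.Ioo (0:ℝ) S) := hΩo.prod isOpen_Ioo
      have hgs : ContDiffAt ℝ 2 (fun s' => u x₀ t₀ s') s₀ := by
        have hmap : ContDiff ℝ 2 (fun s' : ℝ => ((x₀, s') : (Fin d → ℝ) × ℝ)) :=
          contDiff_const.prodMk contDiff_id
        exact (hcxs.contDiffAt (hopen.mem_nhds ⟨hx₀Ω, hs₀oo⟩)).comp s₀ hmap.contDiffAt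
      have hsdts : σ * deriv (fun s1 => deriv (fun s2 => u x₀ t₀ s2) s1) s₀ ≤ 0 := by
        have h1 := aux_sdt (contDiffAt_const.mul hgs) hlocs
        rwa [aux_dd_mul σ hgs] at h1
      -- x-directions
      have hxineq : ∀ i : Fin d,
          Dx i (x₀, t₀, s₀) = 0 ∧
          σ * deriv (fun r => deriv
            (fun r' => u (Function.update x₀ i r') t₀ s₀) r) (x₀ i) ≤ 0 := by
        intro i
        have hXi := hDx i x₀ hx₀Ω t₀ ht₀T s₀ hs₀oo
        have hupd : ContDiff ℝ 2 (fun r : ℝ => Function.update x₀ i r) :=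
          contDiff_update 2 x₀ i
        have hU : IsOpen ((fun r : ℝ => Function.update x₀ i r) ⁻¹' Ω) :=
          hΩo.preimage hupd.continuous
        have hxU : (x₀ i) ∈ ((fun r : ℝ => Function.update x₀ i r) ⁻¹' Ω) := by
          simp only [Set.mem_preimage, Function.update_eq_self]; exact hx₀Ω
        have hloc : IsLocalMax
            (fun r => σ * u (Function.update x₀ i r) t₀ s₀) (x₀ i) := by
          filter_upwards [hU.mem_nhds hxU] with r hr
          have hmem : ((Function.update x₀ i r, t₀, s₀) : (Fin d → ℝ) × ℝ × ℝ) ∈ K' :=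
            ⟨subset_closure hr, ⟨ht₀I, hs₀I⟩⟩
          have h := hmaxpt _ hmem
          simp only [hFval] at h
          simp only [Function.update_eq_self]
          linarith
        have hgi : ContDiffAt ℝ 2
            (fun r => u (Function.update x₀ i r) t₀ s₀) (x₀ i) := by
          have hmap : ContDiff ℝ 2
              (fun r : ℝ => ((Function.update x₀ i r, s₀) : (Fin d → ℝ) × ℝ)) :=
            hupd.prodMk contDiff_const
          have hmem2 : ((Function.update x₀ i (x₀ i), s₀) :
              (Fin d → ℝ) × ℝ) ∈ Ω ×ˢ Set.Ioo 0 S := by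
            rw [Function.update_eq_self]; exact ⟨hx₀Ω, hs₀oo⟩
          exact (hcxs.contDiffAt (hopen.mem_nhds hmem2)).comp (x₀ i) hmap.contDiffAt
        constructor
        · have h := hloc.hasDerivAt_eq_zero (hXi.const_mul σ)
          exact (mul_eq_zero.1 h).resolve_left hσne
        · have h1 := aux_sdt (contDiffAt_const.mul hgi) hloc
          rwa [aux_dd_mul σ hgi] at h1
      have hφterm : ∀ i : Fin d,
          deriv (fun r => φ i (u (Function.update x₀ i r) t₀ s₀)) (x₀ i) = 0 := by
        intro i
        have hXi := hDx i x₀ hx₀Ω t₀ ht₀T s₀ hs₀oo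
        have hcomp := (((hφ i).differentiable (by norm_num)) _).hasDerivAt.comp (x₀ i) hXi
        rw [(hxineq i).1, mul_zero] at hcomp
        exact hcomp.deriv
      -- the source term vanishes at the maximum point
      have hKβ : Kker ω γ τ t₀ * β x₀ s₀ (u x₀ t₀ s₀) = 0 := by
        by_cases htK : t₀ < τ - γ
        · have hω0 : ω ((t₀ - τ) / γ) = 0 := by
            by_contra hne
            have hsupp := hω_supp (Function.mem_support.2 hne)
            have harg : (t₀ - τ) / γ < -1 := by
              rw [div_lt_iff₀ hγpos]; linarith
            linarith [hsupp.1]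
          rw [Kker, if_pos (by linarith : t₀ ≤ τ), hω0, mul_zero, zero_mul]
        · push_neg at htK
          have hβ0 : β x₀ s₀ (u x₀ t₀ s₀) = 0 := by
            apply hβsupp
            have h1 : Real.exp (ξstar * t₀) * (M + η) < σ * u x₀ t₀ s₀ := by
              have hh := hF0; simp only [hFval] at hh; linarith
            have h2 : Real.exp (ξstar * t₀) * M ≤ Real.exp (ξstar * t₀) * (M + η) :=
              mul_le_mul_of_nonneg_left (by linarith) (Real.exp_pos _).le
            calc b₁ < Real.exp (ξstar * t₀) * M := hexpfact t₀ ht₀I.1 htK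
              _ ≤ Real.exp (ξstar * t₀) * (M + η) := h2
              _ < σ * u x₀ t₀ s₀ := h1
              _ ≤ |u x₀ t₀ s₀| := hσabs _
          rw [hβ0, mul_zero]
      -- the PDE at the maximum point yields a contradiction
      have hpde := hu.pde x₀ hx₀Ω t₀ ht₀T s₀ hs₀oo
      rw [hA.deriv, haterm,
        Finset.sum_eq_zero (fun i _ => hφterm i), hKβ] at hpde
      simp only [add_zero, zero_add] at hpde
      have hlhs : σ * Dt (x₀, t₀, s₀) ≤ 0 := by
        rw [hpde]
        have h1 : ∑ i : Fin d, σ * deriv (fun r => deriv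
            (fun r' => u (Function.update x₀ i r') t₀ s₀) r) (x₀ i) ≤ 0 :=
          Finset.sum_nonpos (fun i _ => (hxineq i).2)
        have h2 : σ * (ε * deriv (fun s1 => deriv (fun s2 => u x₀ t₀ s2) s1) s₀) ≤ 0 := by
          have h2' := mul_le_mul_of_nonneg_left hsdts hε.1.le
          rw [mul_zero] at h2'
          calc σ * (ε * deriv (fun s1 => deriv (fun s2 => u x₀ t₀ s2) s1) s₀)
              = ε * (σ * deriv (fun s1 => deriv (fun s2 => u x₀ t₀ s2) s1) s₀) := by ring
            _ ≤ 0 := h2'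
        calc σ * ((∑ i : Fin d, deriv (fun r => deriv
              (fun r' => u (Function.update x₀ i r') t₀ s₀) r) (x₀ i)) +
              ε * deriv (fun s1 => deriv (fun s2 => u x₀ t₀ s2) s1) s₀)
            = (∑ i : Fin d, σ * deriv (fun r => deriv
              (fun r' => u (Function.update x₀ i r') t₀ s₀) r) (x₀ i)) +
              σ * (ε * deriv (fun s1 => deriv (fun s2 => u x₀ t₀ s2) s1) s₀) := by
              rw [mul_add, Finset.mul_sum]
          _ ≤ 0 := by linarith
      have hpos : 0 < σ * Dt (x₀, t₀, s₀) := by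
        have h3 : 0 ≤ ξstar * Real.exp (ξstar * t₀) * (M + η) :=
          mul_nonneg (mul_nonneg hξ0 (Real.exp_pos _).le) hMη.le
        linarith [htime]
      linarith
    by_contra hfin
    push_neg at hfin
    set c := Real.exp (ξstar * t₁) + t₁ with hcdef
    have hcpos : 0 < c := by
      have := Real.exp_pos (ξstar * t₁); rw [hcdef]; linarith [ht₁.1]
    set D := |u x₁ t₁ s₁| - Real.exp (ξstar * t₁) * M with hDdef
    have hDpos : 0 < D := by rw [hDdef]; linarith
    have hηpos : 0 < D / (2 * c) := by positivity
    have h := hstep (D / (2 * c)) hηpos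
    have hkey : (D / (2 * c)) * c = D / 2 := by
      field_simp
    have hexpand : Real.exp (ξstar * t₁) * (M + D / (2 * c)) + (D / (2 * c)) * t₁ =
        Real.exp (ξstar * t₁) * M + (D / (2 * c)) * c := by
      rw [hcdef]; ring
    rw [hexpand, hkey] at h
    have hDval : D = |u x₁ t₁ s₁| - Real.exp (ξstar * t₁) * M := hDdef
    linarith
  intro x hx s hs
  rcases lt_or_eq_of_le ht'.2 with h | h
  · exact main2 t' ⟨ht'.1, h⟩ x hx s hs
  · subst h
    have hcont1 : ContinuousOn (fun t => u x t s) (Set.Icc 0 t') := by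
      have hmap : ContinuousOn (fun t : ℝ => ((x, t, s) : (Fin d → ℝ) × ℝ × ℝ))
          (Set.Icc 0 t') := Continuous.continuousOn (by fun_prop)
      exact hu.cont.comp hmap (fun t ht => ⟨hx, ht, hs⟩)
    have hnb : (𝓝[Set.Ioo (0:ℝ) t'] t').NeBot := by
      refine mem_closure_iff_nhdsWithin_neBot.1 ?_
      rw [closure_Ioo (ne_of_lt ht'.1)]
      exact ⟨ht'.1.le, le_refl t'⟩
    have htend : Filter.Tendsto (fun t => |u x t s|) (𝓝[Set.Ioo 0 t'] t')
        (𝓝 |u x t' s|) := by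
      have h1 : Filter.Tendsto (fun t => u x t s) (𝓝[Set.Ioo 0 t'] t')
          (𝓝 (u x t' s)) :=
        (hcont1 t' (Set.right_mem_Icc.2 ht'.1.le)).mono_left
          (nhdsWithin_mono _ Set.Ioo_subset_Icc_self)
      exact (continuous_abs.tendsto _).comp h1
    refine le_of_tendsto htend ?_
    filter_upwards [self_mem_nhdsWithin] with t ht
    calc |u x t s| ≤ Real.exp (ξstar * t) * M := main2 t ht x hx s hs
      _ ≤ Real.exp (ξstar * t') * M := by
          refine mul_le_mul_of_nonneg_right ?_ hMpos.le
          exact Real.exp_le_exp.2 (mul_le_mul_of_nonneg_left ht.2.le hξ0)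
end

section
/- Let β : ℝ → ℝ be continuously differentiable, let M > 0, and let v, w ∈ ℝ with |v| ≤ M and |w| ≤ M. Then ∫_{−M}^{M} χ(λ; v) dλ = ∫_{−M}^{M} (1 + β'(λ))·χ(λ; w) dλ + β(0) holds if and only if v = w + β(w). -/
/-! `χ(·; v)` is the signed indicator of the interval between `0` and `v`, so integrating
`f · χ(·; v)` over any interval containing `0` and `v` gives `∫₀ᵛ f`. With `f = 1` this is `v`,
and with `f = 1 + β'` it is `w + β w - β 0` by the fundamental theorem of calculus. -/

open MeasureTheory intervalIntegral

open Set

lemma mul_chi_of_nonneg (f : ℝ → ℝ) {v : ℝ} (hv : 0 ≤ v) (l : ℝ) :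
    f l * chi l v = (Ioo 0 v).indicator f l := by
  simp only [chi, indicator_apply, mem_Ioo]
  split_ifs <;> grind

lemma mul_chi_of_neg (f : ℝ → ℝ) {v : ℝ} (hv : v < 0) (l : ℝ) :
    f l * chi l v = -(Ioo v 0).indicator f l := by
  simp only [chi, indicator_apply, mem_Ioo]
  split_ifs <;> grind

lemma integral_indicator_Ioo {a b c d : ℝ} (f : ℝ → ℝ) (hac : a ≤ c) (hcd : c ≤ d) (hdb : d ≤ b) :
    ∫ l in a..b, (Ioo c d).indicator f l = ∫ l in c..d, f l := by
  rw [integral_of_le (hac.trans (hcd.trans hdb)), integral_of_le hcd,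
    setIntegral_indicator measurableSet_Ioo,
    inter_eq_self_of_subset_right (Ioo_subset_Ioc_self.trans (Ioc_subset_Ioc hac hdb)),
    integral_Ioc_eq_integral_Ioo]

lemma integral_mul_chi {a b v : ℝ} (f : ℝ → ℝ) (ha : a ≤ min 0 v) (hb : max 0 v ≤ b) :
    ∫ l in a..b, f l * chi l v = ∫ l in 0..v, f l := by
  rcases le_or_gt 0 v with hv | hv
  · simp_rw [mul_chi_of_nonneg f hv]
    exact integral_indicator_Ioo f (le_min_iff.mp ha).1 hv (max_le_iff.mp hb).2
  · simp_rw [mul_chi_of_neg f hv, intervalIntegral.integral_neg, integral_symm v 0]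
    rw [integral_indicator_Ioo f (le_min_iff.mp ha).2 hv.le (max_le_iff.mp hb).1]

lemma integral_one_add_deriv {β : ℝ → ℝ} (hβ : ContDiff ℝ 1 β) (a b : ℝ) :
    ∫ l in a..b, (1 + deriv β l) = b + β b - (a + β a) := by
  have hβ' : Continuous (deriv β) := hβ.continuous_deriv le_rfl
  rw [integral_add intervalIntegrable_const (hβ'.intervalIntegrable a b),
    integral_deriv_eq_sub (fun x _ => hβ.differentiable one_ne_zero x) (hβ'.intervalIntegrable a b)]
  simp only [intervalIntegral.integral_const, smul_eq_mul, mul_one]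
  ring

theorem kinetic_impulsive_condition_iff_general (β : ℝ → ℝ) (hβ : ContDiff ℝ 1 β)
    (M : ℝ) (v w : ℝ) (hv : |v| ≤ M) (hw : |w| ≤ M) :
    (∫ l in (-M)..M, chi l v) = (∫ l in (-M)..M, (1 + deriv β l) * chi l w) + β 0 ↔
      v = w + β w := by
  have bounds : ∀ {u : ℝ}, |u| ≤ M → -M ≤ min 0 u ∧ max 0 u ≤ M := fun hu => by
    have := abs_le.mp hu
    constructor <;> [apply le_min; apply max_le] <;> linarith
  have lhs : ∫ l in (-M)..M, chi l v = v := by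
    simpa using integral_mul_chi (fun _ => 1) (bounds hv).1 (bounds hv).2
  rw [lhs, integral_mul_chi _ (bounds hw).1 (bounds hw).2, integral_one_add_deriv hβ]
  constructor <;> intro h <;> linarith

/-- Formulas (13.3)–(13.6): pointwise equivalence of the kinetic impulsive condition (9.4e)
and the impulsive condition (9.2b): for `|v|, |w| ≤ M`,
`∫_{-M}^M χ(λ; v) dλ = ∫_{-M}^M (1 + β'(λ)) χ(λ; w) dλ + β(0)` iff `v = w + β(w)`. -/
theorem kinetic_impulsive_condition_iff (β : ℝ → ℝ) (hβ : ContDiff ℝ 1 β)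
    (M : ℝ) (hM : 0 < M) (v w : ℝ) (hv : |v| ≤ M) (hw : |w| ≤ M) :
    (∫ l in (-M)..M, chi l v) = (∫ l in (-M)..M, (1 + deriv β l) * chi l w) + β 0 ↔
      v = w + β w :=
  kinetic_impulsive_condition_iff_general β hβ M v w hv hw
end
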